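/- Let q > 2 be odd. For every n ≥ 1 and nonnegative integer m with mq < n+1 ≤ (m+1)q, the sequence g satisfies g(n+1) = g(n) + g(m+1), where g(n) = f_{2,q}(qn−1) for n ≥ 1 and g(0) = 0. -/

import Mathlib

open Filter Real

/-- Number of representations of `n` as a sum of distinct terms of the form `p^a * q^b`. -/
noncomputable def fpq (p q n : ℕ) : ℕ :=
  Set.ncard {S : Finset ℕ | (∀ k ∈ S, ∃ a b : ℕ, k = p ^ a * q ^ b) ∧ S.sum id = n}

/-!
Split a representation `S` of `N` into its parts divisible by `q` and the rest. Since `q` is odd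
and not `1`, the rest consists of powers of two, so it is the binary expansion of `N - q * j`,
where `j` is the sum of the divisible parts divided by `q`; those quotients form an arbitrary
representation of `j`. Hence `f(N) = ∑_{j ≤ N / q} f(j)`. As `(q * n - 1) / q = n - 1`, this
gives `g(n) = ∑_{j < n} f(j)`, so `g(n + 1) - g(n) = f(n) = ∑_{j ≤ m} f(j) = g(m + 1)`.
-/

open Finset

def binaryParts (n : ℕ) : Finset ℕ := n.bitIndices.toFinset.image (2 ^ ·)

lemma two_pow_injective : Function.Injective (2 ^ · : ℕ → ℕ) :=
  Nat.pow_right_injective le_rfl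

lemma sum_binaryParts (n : ℕ) : (binaryParts n).sum id = n := by
  rw [binaryParts, sum_image fun _ _ _ _ h => two_pow_injective h]
  exact sum_toFinset_bitIndices_two_pow n

lemma exists_eq_two_pow_of_mem_binaryParts {n k : ℕ} (hk : k ∈ binaryParts n) :
    ∃ a, k = 2 ^ a := by
  obtain ⟨a, -, rfl⟩ := mem_image.1 hk
  exact ⟨a, rfl⟩

lemma eq_binaryParts_sum {S : Finset ℕ} (hS : ∀ k ∈ S, ∃ a, k = 2 ^ a) :
    S = binaryParts (S.sum id) := by
  set E := S.image (Nat.log 2)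
  have hSE : E.image (2 ^ ·) = S := by
    rw [image_image]
    convert image_id (s := S) using 1
    refine image_congr fun k hk => ?_
    obtain ⟨a, rfl⟩ := hS k hk
    simp [Nat.log_pow one_lt_two]
  have hsum : S.sum id = ∑ i ∈ E, 2 ^ i := by
    rw [← hSE, sum_image fun _ _ _ _ h => two_pow_injective h]
    rfl
  rw [hsum, binaryParts, toFinset_bitIndices_sum_two_pow, hSE]

open Classical in
noncomputable def representations (p q n : ℕ) : Finset (Finset ℕ) :=
  (range (n + 1)).powerset.filter
    fun S => (∀ k ∈ S, ∃ a b : ℕ, k = p ^ a * q ^ b) ∧ S.sum id = n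

open Classical in
lemma mem_representations {p q n : ℕ} {S : Finset ℕ} :
    S ∈ representations p q n ↔
      (∀ k ∈ S, ∃ a b : ℕ, k = p ^ a * q ^ b) ∧ S.sum id = n := by
  refine ⟨fun h => (mem_filter.1 h).2,
    fun h => mem_filter.2 ⟨mem_powerset.2 fun k hk => ?_, h⟩⟩
  rw [mem_range, Nat.lt_succ_iff, ← h.2]
  exact single_le_sum (f := id) (fun _ _ => Nat.zero_le _) hk

lemma fpq_eq_card_representations (p q n : ℕ) : fpq p q n = #(representations p q n) := by
  rw [fpq, ← Set.ncard_coe_finset]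
  congr 1
  ext S
  simp [mem_representations]

lemma sum_image_mul_left {q : ℕ} (hq : 0 < q) (T : Finset ℕ) :
    (T.image (q * ·)).sum id = q * T.sum id := by
  rw [sum_image fun _ _ _ _ h => Nat.eq_of_mul_eq_mul_left hq h, mul_sum]
  rfl

def quotPart (q : ℕ) (S : Finset ℕ) : Finset ℕ := (S.filter (q ∣ ·)).image (· / q)

lemma filter_not_dvd_union_quotPart (q : ℕ) (S : Finset ℕ) :
    S.filter (¬ q ∣ ·) ∪ (quotPart q S).image (q * ·) = S := by
  have : (quotPart q S).image (q * ·) = S.filter (q ∣ ·) := by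
    rw [quotPart, image_image]
    convert image_id (s := S.filter (q ∣ ·)) using 1
    exact image_congr fun k hk => Nat.mul_div_cancel' (mem_filter.1 hk).2
  rw [this, union_comm, filter_union_filter_not_eq]

lemma sum_eq_sum_filter_not_dvd_add {q : ℕ} (hq : 0 < q) (S : Finset ℕ) :
    S.sum id = (S.filter (¬ q ∣ ·)).sum id + q * (quotPart q S).sum id := by
  have hdisj : Disjoint (S.filter (¬ q ∣ ·)) ((quotPart q S).image (q * ·)) := by
    refine disjoint_left.2 fun k hk hk' => ?_
    obtain ⟨t, -, rfl⟩ := mem_image.1 hk'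
    exact (mem_filter.1 hk).2 (dvd_mul_right q t)
  conv_lhs => rw [← filter_not_dvd_union_quotPart q S]
  rw [sum_union hdisj, sum_image_mul_left hq]

lemma eq_binaryParts_union_quotPart {q : ℕ} (hq : 0 < q) {S : Finset ℕ} {N : ℕ}
    (hS : S ∈ representations 2 q N) :
    S = binaryParts (N - q * (quotPart q S).sum id) ∪ (quotPart q S).image (q * ·) := by
  obtain ⟨hform, hsum⟩ := mem_representations.1 hS
  have hpow : ∀ k ∈ S.filter (¬ q ∣ ·), ∃ a, k = 2 ^ a := by
    intro k hk
    obtain ⟨hkS, hqk⟩ := mem_filter.1 hk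
    obtain ⟨a, b, rfl⟩ := hform k hkS
    cases b with
    | zero => exact ⟨a, by ring⟩
    | succ b => exact absurd ⟨2 ^ a * q ^ b, by ring⟩ hqk
  have hN := sum_eq_sum_filter_not_dvd_add hq S
  conv_lhs => rw [← filter_not_dvd_union_quotPart q S, eq_binaryParts_sum hpow]
  congr 2
  omega

section OddBase

variable {q : ℕ} (hodd : Odd q) (hq1 : q ≠ 1)
include hodd hq1

lemma not_dvd_two_pow (a : ℕ) : ¬ q ∣ 2 ^ a := fun h =>
  hq1 <| ((Nat.coprime_two_right.2 hodd).pow_right a).eq_one_of_dvd h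

lemma quotPart_binaryParts_union (c : ℕ) (T : Finset ℕ) :
    quotPart q (binaryParts c ∪ T.image (q * ·)) = T := by
  have hq : 0 < q := hodd.pos
  have : (binaryParts c ∪ T.image (q * ·)).filter (q ∣ ·) = T.image (q * ·) := by
    rw [filter_union, filter_false_of_mem, filter_true_of_mem, empty_union]
    · intro k hk
      obtain ⟨t, -, rfl⟩ := mem_image.1 hk
      exact dvd_mul_right q t
    · intro k hk
      obtain ⟨a, rfl⟩ := exists_eq_two_pow_of_mem_binaryParts hk
      exact not_dvd_two_pow hodd hq1 a
  rw [quotPart, this, image_image]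
  convert image_id (s := T) using 1
  exact image_congr fun t _ => Nat.mul_div_cancel_left t hq

lemma binaryParts_union_mem_representations {j N : ℕ} (hjN : q * j ≤ N) {T : Finset ℕ}
    (hT : T ∈ representations 2 q j) :
    binaryParts (N - q * j) ∪ T.image (q * ·) ∈ representations 2 q N := by
  obtain ⟨hTform, hTsum⟩ := mem_representations.1 hT
  refine mem_representations.2 ⟨fun k hk => ?_, ?_⟩
  · rcases mem_union.1 hk with hk | hk
    · obtain ⟨a, rfl⟩ := exists_eq_two_pow_of_mem_binaryParts hk
      exact ⟨a, 0, by ring⟩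
    · obtain ⟨t, ht, rfl⟩ := mem_image.1 hk
      obtain ⟨a, b, rfl⟩ := hTform t ht
      exact ⟨a, b + 1, by ring⟩
  · rw [sum_eq_sum_filter_not_dvd_add hodd.pos, quotPart_binaryParts_union hodd hq1,
      filter_union, filter_true_of_mem, filter_false_of_mem, union_empty, sum_binaryParts, hTsum]
    · omega
    · intro k hk
      obtain ⟨t, -, rfl⟩ := mem_image.1 hk
      exact fun h => h (dvd_mul_right q t)
    · intro k hk
      obtain ⟨a, rfl⟩ := exists_eq_two_pow_of_mem_binaryParts hk
      exact not_dvd_two_pow hodd hq1 a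

lemma quotPart_mem_representations {S : Finset ℕ}
    (hS : ∀ k ∈ S, ∃ a b : ℕ, k = 2 ^ a * q ^ b) :
    quotPart q S ∈ representations 2 q ((quotPart q S).sum id) := by
  refine mem_representations.2 ⟨?_, rfl⟩
  intro k' hk'
  obtain ⟨k, hk, rfl⟩ := mem_image.1 hk'
  obtain ⟨hkS, hqk⟩ := mem_filter.1 hk
  obtain ⟨a, b, rfl⟩ := hS k hkS
  cases b with
  | zero => exact absurd (by simpa using hqk) (not_dvd_two_pow hodd hq1 a)
  | succ b => exact ⟨a, b, by rw [pow_succ, ← mul_assoc, Nat.mul_div_cancel _ hodd.pos]⟩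

theorem card_representations_two_eq_sum (N : ℕ) :
    #(representations 2 q N) = ∑ j ∈ range (N / q + 1), #(representations 2 q j) := by
  have hq : 0 < q := hodd.pos
  have hmaps : Set.MapsTo (fun S => (quotPart q S).sum id) (representations 2 q N)
      (range (N / q + 1)) := by
    intro S hS
    rw [coe_range, Set.mem_Iio, Nat.lt_succ_iff, Nat.le_div_iff_mul_le hq, mul_comm]
    have := sum_eq_sum_filter_not_dvd_add hq S
    rw [(mem_representations.1 (mem_coe.1 hS)).2] at this
    dsimp only
    omega
  rw [card_eq_sum_card_fiberwise hmaps]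
  refine sum_congr rfl fun j hj => ?_
  have hjN : q * j ≤ N := by
    rw [mem_range, Nat.lt_succ_iff, Nat.le_div_iff_mul_le hq] at hj
    linarith
  refine card_nbij' (quotPart q) (fun T => binaryParts (N - q * j) ∪ T.image (q * ·))
    ?_ ?_ ?_ ?_
  · intro S hS
    obtain ⟨hSN, rfl⟩ := mem_filter.1 hS
    exact quotPart_mem_representations hodd hq1 (mem_representations.1 hSN).1
  · intro T hT
    refine mem_filter.2 ⟨binaryParts_union_mem_representations hodd hq1 hjN hT, ?_⟩
    rw [quotPart_binaryParts_union hodd hq1, (mem_representations.1 (mem_coe.1 hT)).2]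
  · intro S hS
    obtain ⟨hSN, rfl⟩ := mem_filter.1 hS
    exact (eq_binaryParts_union_quotPart hq hSN).symm
  · intro T _
    exact quotPart_binaryParts_union hodd hq1 _ T

theorem fpq_two_eq_sum_range (N : ℕ) :
    fpq 2 q N = ∑ j ∈ range (N / q + 1), fpq 2 q j := by
  rw [fpq_eq_card_representations, card_representations_two_eq_sum hodd hq1]
  exact sum_congr rfl fun j _ => (fpq_eq_card_representations 2 q j).symm

theorem fpq_two_mul_sub_one {n : ℕ} (hn : 0 < n) :
    fpq 2 q (q * n - 1) = ∑ j ∈ range n, fpq 2 q j := by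
  have hq : 0 < q := hodd.pos
  have hqn : q * n = q * (n - 1) + q := by rw [← Nat.mul_add_one, Nat.sub_add_cancel hn]
  have hdiv : (q * n - 1) / q + 1 = n := by
    rw [Nat.div_eq_of_lt_le (k := n - 1)]
    · omega
    · rw [mul_comm]; omega
    · rw [Nat.sub_add_cancel hn, mul_comm n q]; omega
  rw [fpq_two_eq_sum_range hodd hq1, hdiv]

end OddBase

theorem stmt19_general (q : ℕ) (hq : 2 < q) (hodd : Odd q) (g : ℕ → ℕ)
    (hg : ∀ n : ℕ, 1 ≤ n → g n = fpq 2 q (q * n - 1)) :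
    ∀ n : ℕ, 1 ≤ n → ∀ m : ℕ, m * q < n + 1 → n + 1 ≤ (m + 1) * q →
      g (n + 1) = g n + g (m + 1) := by
  intro n hn m hmn hnm
  have hq1 : q ≠ 1 := by omega
  have hnq : n / q = m := Nat.div_eq_of_lt_le (by lia) (by lia)
  rw [hg _ (by omega), hg n hn, hg _ (by omega), fpq_two_mul_sub_one hodd hq1 (by omega),
    fpq_two_mul_sub_one hodd hq1 (by omega), fpq_two_mul_sub_one hodd hq1 (by omega),
    sum_range_succ, fpq_two_eq_sum_range hodd hq1 n, hnq]

theorem stmt19 (q : ℕ) (hq : 2 < q) (hodd : Odd q) (g : ℕ → ℕ)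
    (hg0 : g 0 = 0) (hg : ∀ n : ℕ, 1 ≤ n → g n = fpq 2 q (q * n - 1)) :
    ∀ n : ℕ, 1 ≤ n → ∀ m : ℕ, m * q < n + 1 → n + 1 ≤ (m + 1) * q →
      g (n + 1) = g n + g (m + 1) :=
  stmt19_general q hq hodd g hg
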